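/- arXiv:2410.23862 — 2 statements merged into one kernel-verified Lean document; each statement's English description precedes it below -/
import Mathlib

section
/- In the linear SEM setup, assume in addition that the covariance matrix Σ : Matrix (Fin d) (Fin d) ℝ defined by Σ i j := E[(x i) * (x j)] is positive definite. Then for every strictly upper triangular matrix W (W i j = 0 unless i < j), F(W) = F(W⋆) if and only if W = W⋆; in particular W⋆ is the unique minimizer of F over strictly upper triangular matrices. -/
/-!
Put `Δ = W⋆ - W`. The structural equation `x = W⋆ᵀ x + N` makes the residual `x - Wᵀ x`
equal to `N + Δᵀ x`, whose `i`-th coordinate involves `x k` only for `k < i`. Since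
`(1 - W⋆ᵀ)⁻¹` is lower triangular, these `x k` are combinations of `N p` with `p < i`,
hence uncorrelated with `N i`. Pythagoras then gives
`2 F(W) = ∑ i, E[N i ^ 2] + ∑ i, (Δᵀ i)ᵀ Σ (Δᵀ i)`, and positive definiteness of `Σ` shows
that the second sum vanishes only for `Δ = 0`.
-/
open MeasureTheory Matrix

section SecondMoments
variable {Ω ι : Type*} [MeasurableSpace Ω] {P : Measure Ω} [Fintype ι]

noncomputable def secondMoment (P : Measure Ω) (g : ι → Ω → ℝ) : Matrix ι ι ℝ :=
  of fun k l => ∫ ω, g k ω * g l ω ∂P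

theorem integral_mul_sum_mul {f : Ω → ℝ} {g : ι → Ω → ℝ} (hf : MemLp f 2 P)
    (hg : ∀ k, MemLp (g k) 2 P) (a : ι → ℝ) :
    ∫ ω, f ω * ∑ k, a k * g k ω ∂P = ∑ k, a k * ∫ ω, f ω * g k ω ∂P := by
  have hint : ∀ k, Integrable (fun ω => a k * (f ω * g k ω)) P :=
    fun k => (hf.integrable_mul (hg k)).const_mul _
  simp_rw [Finset.mul_sum, mul_left_comm (f _), integral_finsetSum _ fun k _ => hint k,
    integral_const_mul]

theorem integral_sum_mul_sq {g : ι → Ω → ℝ} (hg : ∀ k, MemLp (g k) 2 P) (a : ι → ℝ) :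
    ∫ ω, (∑ k, a k * g k ω) ^ 2 ∂P = a ⬝ᵥ (secondMoment P g *ᵥ a) := by
  have hsum : MemLp (fun ω => ∑ k, a k * g k ω) 2 P :=
    memLp_finsetSum _ fun k _ => (hg k).const_mul (a k)
  simp_rw [sq]
  rw [integral_mul_sum_mul hsum hg]
  refine Finset.sum_congr rfl fun k _ => ?_
  simp_rw [mul_comm _ (g k _), integral_mul_sum_mul (hg k) hg, mulVec, dotProduct, secondMoment,
    of_apply, mul_comm (a _)]

theorem integral_add_sq_of_integral_mul_eq_zero {f g : Ω → ℝ} (hf : MemLp f 2 P)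
    (hg : MemLp g 2 P) (hfg : ∫ ω, f ω * g ω ∂P = 0) :
    ∫ ω, (f ω + g ω) ^ 2 ∂P = ∫ ω, f ω ^ 2 ∂P + ∫ ω, g ω ^ 2 ∂P := by
  have hfg' : Integrable (fun ω => 2 * (f ω * g ω)) P := (hf.integrable_mul hg).const_mul 2
  simp_rw [add_sq', mul_assoc]
  rw [integral_add (hf.integrable_sq.fun_add hg.integrable_sq) hfg',
    integral_add hf.integrable_sq hg.integrable_sq, integral_const_mul, hfg, mul_zero, add_zero]

end SecondMoments

namespace Matrix
variable {n R : Type*} [LinearOrder n] [CommRing R] {W : Matrix n n R}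

theorem isLowerTriangular_one_sub_transpose (hW : ∀ i j, ¬ i < j → W i j = 0) :
    (1 - Wᵀ).IsLowerTriangular := by
  intro i j (hij : i < j)
  simp [one_apply_ne hij.ne, hW j i (not_lt_of_gt hij)]

variable [Fintype n]

theorem det_one_sub_transpose (hW : ∀ i j, ¬ i < j → W i j = 0) : (1 - Wᵀ).det = 1 := by
  rw [det_of_isLowerTriangular _ (isLowerTriangular_one_sub_transpose hW)]
  simp [hW _ _ (lt_irrefl _)]

theorem isLowerTriangular_inv_one_sub_transpose (hW : ∀ i j, ¬ i < j → W i j = 0) :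
    (1 - Wᵀ)⁻¹.IsLowerTriangular :=
  letI := invertibleOfIsUnitDet _ (det_one_sub_transpose hW ▸ isUnit_one)
  blockTriangular_inv_of_blockTriangular (isLowerTriangular_one_sub_transpose hW)

end Matrix

theorem Matrix.PosDef.sum_dotProduct_mulVec_eq_zero_iff {m n R : Type*} [Fintype m] [Fintype n]
    [Ring R] [PartialOrder R] [IsOrderedAddMonoid R] [StarRing R] [TrivialStar R]
    {A : Matrix n n R} (hA : A.PosDef) (B : Matrix m n R) :
    ∑ i, B i ⬝ᵥ (A *ᵥ B i) = 0 ↔ B = 0 := by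
  refine ⟨fun h => ?_, ?_⟩
  · ext i j
    have hi := (Finset.sum_eq_zero_iff_of_nonneg fun i _ => by
      simpa using hA.posSemidef.dotProduct_mulVec_nonneg (B i)).mp h i (Finset.mem_univ i)
    by_contra hij
    have hpos := hA.dotProduct_mulVec_pos fun hBi => hij (congrFun hBi j)
    rw [star_trivial] at hpos
    exact hpos.ne' hi
  · rintro rfl
    exact Finset.sum_eq_zero fun i _ => by simp [show (0 : Matrix m n R) i = 0 from rfl]

structure IsLinearSEM {Ω ι : Type*} [MeasurableSpace Ω] [Fintype ι] [LinearOrder ι]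
    (P : Measure Ω) (N x : Ω → EuclideanSpace ℝ ι) (W : Matrix ι ι ℝ) : Prop where
  memLp_noise : ∀ i, MemLp (fun ω => N ω i) 2 P
  integral_noise_mul_noise : ∀ i j, i ≠ j → ∫ ω, N ω i * N ω j ∂P = 0
  strictUpper : ∀ i j, ¬ i < j → W i j = 0
  eq_inv_mulVec : ∀ ω, x ω = (WithLp.equiv 2 (ι → ℝ)).symm
    ((1 - W.transpose)⁻¹.mulVec (WithLp.equiv 2 (ι → ℝ) (N ω)))

namespace IsLinearSEM
variable {Ω ι : Type*} [MeasurableSpace Ω] [Fintype ι] [LinearOrder ι] {P : Measure Ω}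
  {N x : Ω → EuclideanSpace ℝ ι} {W : Matrix ι ι ℝ}

theorem apply_eq_sum_inv_mul (h : IsLinearSEM P N x W) (ω : Ω) (k : ι) :
    x ω k = ∑ p, (1 - Wᵀ)⁻¹ k p * N ω p := by
  simp [h.eq_inv_mulVec ω, mulVec, dotProduct]

theorem memLp_apply (h : IsLinearSEM P N x W) (k : ι) : MemLp (fun ω => x ω k) 2 P := by
  simp_rw [h.apply_eq_sum_inv_mul]
  exact memLp_finsetSum _ fun p _ => (h.memLp_noise p).const_mul _

theorem apply_eq_noise_add_sum (h : IsLinearSEM P N x W) (ω : Ω) (i : ι) :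
    x ω i = N ω i + ∑ k, W k i * x ω k := by
  have hunit : IsUnit (1 - Wᵀ).det := det_one_sub_transpose h.strictUpper ▸ isUnit_one
  have hstruct : (1 - Wᵀ) *ᵥ (x ω).ofLp = (N ω).ofLp := by
    rw [h.eq_inv_mulVec ω]
    simp [mulVec_mulVec, mul_nonsing_inv _ hunit]
  have hi := congrFun hstruct i
  rw [sub_mulVec, one_mulVec, Pi.sub_apply] at hi
  simp only [mulVec, dotProduct, transpose_apply] at hi
  linarith

theorem integral_noise_mul_eq_zero_of_lt (h : IsLinearSEM P N x W) {k i : ι} (hki : k < i) :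
    ∫ ω, N ω i * x ω k ∂P = 0 := by
  simp_rw [h.apply_eq_sum_inv_mul, integral_mul_sum_mul (h.memLp_noise i) h.memLp_noise]
  refine Finset.sum_eq_zero fun p _ => ?_
  rcases eq_or_ne p i with rfl | hpi
  · rw [isLowerTriangular_inv_one_sub_transpose h.strictUpper hki, zero_mul]
  · rw [h.integral_noise_mul_noise i p hpi.symm, mul_zero]

theorem memLp_sum_mul (h : IsLinearSEM P N x W) (a : ι → ℝ) :
    MemLp (fun ω => ∑ k, a k * x ω k) 2 P :=
  memLp_finsetSum _ fun k _ => (h.memLp_apply k).const_mul (a k)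

theorem residual_apply (h : IsLinearSEM P N x W) (V : Matrix ι ι ℝ) (ω : Ω) (i : ι) :
    (x ω - (WithLp.equiv 2 (ι → ℝ)).symm (Vᵀ *ᵥ WithLp.equiv 2 (ι → ℝ) (x ω))) i
      = N ω i + ∑ k, (W - V) k i * x ω k := by
  simp only [WithLp.equiv_apply, WithLp.equiv_symm_apply, PiLp.sub_apply, mulVec, dotProduct,
    transpose_apply, Matrix.sub_apply, sub_mul, Finset.sum_sub_distrib,
    h.apply_eq_noise_add_sum ω i]
  ring

theorem integral_residual_apply_sq (h : IsLinearSEM P N x W) {V : Matrix ι ι ℝ}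
    (hV : ∀ i j, ¬ i < j → V i j = 0) (i : ι) :
    ∫ ω, ((x ω - (WithLp.equiv 2 (ι → ℝ)).symm (Vᵀ *ᵥ WithLp.equiv 2 (ι → ℝ) (x ω))) i) ^ 2 ∂P
      = ∫ ω, N ω i ^ 2 ∂P
        + (W - V)ᵀ i ⬝ᵥ (secondMoment P (fun k ω => x ω k) *ᵥ (W - V)ᵀ i) := by
  have hcross : ∫ ω, N ω i * ∑ k, (W - V) k i * x ω k ∂P = 0 := by
    rw [integral_mul_sum_mul (h.memLp_noise i) h.memLp_apply]
    refine Finset.sum_eq_zero fun k _ => ?_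
    by_cases hki : k < i
    · rw [h.integral_noise_mul_eq_zero_of_lt hki, mul_zero]
    · rw [Matrix.sub_apply, h.strictUpper k i hki, hV k i hki, sub_zero, zero_mul]
  simp_rw [h.residual_apply]
  rw [integral_add_sq_of_integral_mul_eq_zero (h.memLp_noise i) (h.memLp_sum_mul _) hcross,
    integral_sum_mul_sq h.memLp_apply]
  rfl

theorem integral_norm_residual_sq (h : IsLinearSEM P N x W) {V : Matrix ι ι ℝ}
    (hV : ∀ i j, ¬ i < j → V i j = 0) :
    ∫ ω, ‖x ω - (WithLp.equiv 2 (ι → ℝ)).symm (Vᵀ *ᵥ WithLp.equiv 2 (ι → ℝ) (x ω))‖ ^ 2 ∂P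
      = ∑ i, ∫ ω, N ω i ^ 2 ∂P
        + ∑ i, (W - V)ᵀ i ⬝ᵥ (secondMoment P (fun k ω => x ω k) *ᵥ (W - V)ᵀ i) := by
  have hint : ∀ i, Integrable (fun ω =>
      ((x ω - (WithLp.equiv 2 (ι → ℝ)).symm (Vᵀ *ᵥ WithLp.equiv 2 (ι → ℝ) (x ω))) i) ^ 2) P := by
    intro i
    simp_rw [h.residual_apply]
    exact ((h.memLp_noise i).add (h.memLp_sum_mul _)).integrable_sq
  simp_rw [EuclideanSpace.norm_sq_eq, Real.norm_eq_abs, sq_abs]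
  rw [integral_finsetSum _ fun i _ => hint i, ← Finset.sum_add_distrib]
  exact Finset.sum_congr rfl fun i _ => h.integral_residual_apply_sq hV i

end IsLinearSEM

theorem sem_unique_minimizer_general {d : ℕ} {Ω : Type*} [MeasurableSpace Ω]
    (P : Measure Ω)
    (N : Ω → EuclideanSpace ℝ (Fin d))
    (hN2 : ∀ i, MemLp (fun ω => N ω i) 2 P)
    (hNuncorr : ∀ i j, i ≠ j → ∫ ω, N ω i * N ω j ∂P = 0)
    (Wstar : Matrix (Fin d) (Fin d) ℝ)
    (hWstar : ∀ i j : Fin d, ¬ i < j → Wstar i j = 0)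
    (x : Ω → EuclideanSpace ℝ (Fin d))
    (hx : ∀ ω, x ω = (WithLp.equiv 2 (Fin d → ℝ)).symm
      ((1 - Wstar.transpose)⁻¹.mulVec (WithLp.equiv 2 (Fin d → ℝ) (N ω))))
    (hSigma : (Matrix.of fun i j : Fin d => ∫ ω, x ω i * x ω j ∂P).PosDef)
    (W : Matrix (Fin d) (Fin d) ℝ)
    (hW : ∀ i j : Fin d, ¬ i < j → W i j = 0) :
    (1 / 2) * ∫ ω, ‖x ω - (WithLp.equiv 2 (Fin d → ℝ)).symm
        (W.transpose.mulVec (WithLp.equiv 2 (Fin d → ℝ) (x ω)))‖ ^ 2 ∂P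
      = (1 / 2) * ∫ ω, ‖x ω - (WithLp.equiv 2 (Fin d → ℝ)).symm
        (Wstar.transpose.mulVec (WithLp.equiv 2 (Fin d → ℝ) (x ω)))‖ ^ 2 ∂P
    ↔ W = Wstar := by
  have hsem : IsLinearSEM P N x Wstar := ⟨hN2, hNuncorr, hWstar, hx⟩
  have hcov : (secondMoment P fun k ω => x ω k).PosDef := hSigma
  rw [hsem.integral_norm_residual_sq hW, hsem.integral_norm_residual_sq hWstar, sub_self,
    transpose_zero, (hcov.sum_dotProduct_mulVec_eq_zero_iff 0).mpr rfl, add_zero,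
    mul_right_inj' (by norm_num), add_eq_left, hcov.sum_dotProduct_mulVec_eq_zero_iff,
    transpose_eq_zero, sub_eq_zero, eq_comm]

/-- In the linear SEM model with positive definite covariance `Σ i j = E[x i * x j]`, the
true matrix `W⋆` is the unique minimizer of the population least-squares loss over matrices
strictly upper triangular in the true topological ordering: `F(W) = F(W⋆) ↔ W = W⋆`. -/
theorem sem_unique_minimizer {d : ℕ} {Ω : Type*} [MeasurableSpace Ω]
    (P : Measure Ω) [IsProbabilityMeasure P]
    (N : Ω → EuclideanSpace ℝ (Fin d))
    (hN2 : ∀ i, MemLp (fun ω => N ω i) 2 P)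
    (hNmean : ∀ i, ∫ ω, N ω i ∂P = 0)
    (hNuncorr : ∀ i j, i ≠ j → ∫ ω, N ω i * N ω j ∂P = 0)
    (Wstar : Matrix (Fin d) (Fin d) ℝ)
    (hWstar : ∀ i j : Fin d, ¬ i < j → Wstar i j = 0)
    (x : Ω → EuclideanSpace ℝ (Fin d))
    (hx : ∀ ω, x ω = (WithLp.equiv 2 (Fin d → ℝ)).symm
      ((1 - Wstar.transpose)⁻¹.mulVec (WithLp.equiv 2 (Fin d → ℝ) (N ω))))
    (hSigma : (Matrix.of fun i j : Fin d => ∫ ω, x ω i * x ω j ∂P).PosDef)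
    (W : Matrix (Fin d) (Fin d) ℝ)
    (hW : ∀ i j : Fin d, ¬ i < j → W i j = 0) :
    (1 / 2) * ∫ ω, ‖x ω - (WithLp.equiv 2 (Fin d → ℝ)).symm
        (W.transpose.mulVec (WithLp.equiv 2 (Fin d → ℝ) (x ω)))‖ ^ 2 ∂P
      = (1 / 2) * ∫ ω, ‖x ω - (WithLp.equiv 2 (Fin d → ℝ)).symm
        (Wstar.transpose.mulVec (WithLp.equiv 2 (Fin d → ℝ) (x ω)))‖ ^ 2 ∂P
    ↔ W = Wstar :=
  sem_unique_minimizer_general P N hN2 hNuncorr Wstar hWstar x hx hSigma W hW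
end

section
/- Let E be a real inner product space and f : E → ℝ convex and L-smooth (L > 0). Then the gradient of f is co-coercive: for all x y ∈ E, (1/L) * ‖∇f x − ∇f y‖² ≤ ⟪∇f x − ∇f y, x − y⟫. -/
/-!
Tilting `f` by the linear form `⟪∇f x, ·⟫` gives a convex `L`-smooth function `g` whose
gradient vanishes at `x`, so `x` minimises `g`. One gradient step of length `1 / L` from `y`
decreases `g` by at least `‖∇g y‖² / (2L)` (descent lemma), whence
`f x + ⟪∇f x, y - x⟫ + ‖∇f y - ∇f x‖² / (2L) ≤ f y`.
Adding this to the same bound with `x` and `y` exchanged gives co-coercivity.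
-/

open Set

section GradientInequalities

variable {E : Type*} [NormedAddCommGroup E] [InnerProductSpace ℝ E]
  {f : E → ℝ} {f' : E → E} {L : ℝ}

lemma hasDerivAt_comp_add_smul {g x v : E} {t : ℝ}
    (hf : HasFDerivAt f (innerSL ℝ g) (x + t • v)) :
    HasDerivAt (fun s : ℝ => f (x + s • v)) (inner ℝ g v) t := by
  have hline : HasDerivAt (fun s : ℝ => x + s • v) v t := by
    simpa using ((hasDerivAt_id t).smul_const v).const_add x
  exact hf.comp_hasDerivAt t hline

lemma inner_sub_grad_le_of_lipschitz (hlip : ∀ x y : E, ‖f' x - f' y‖ ≤ L * ‖x - y‖)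
    (x v : E) {t : ℝ} (ht : 0 ≤ t) :
    inner ℝ (f' (x + t • v)) v - inner ℝ (f' x) v ≤ L * t * ‖v‖ ^ 2 := by
  calc inner ℝ (f' (x + t • v)) v - inner ℝ (f' x) v
      = inner ℝ (f' (x + t • v) - f' x) v := (inner_sub_left _ _ _).symm
    _ ≤ ‖f' (x + t • v) - f' x‖ * ‖v‖ := real_inner_le_norm _ _
    _ ≤ L * ‖x + t • v - x‖ * ‖v‖ := by gcongr; exact hlip _ _
    _ = L * t * ‖v‖ ^ 2 := by
      rw [add_sub_cancel_left, norm_smul, Real.norm_of_nonneg ht]; ring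

lemma le_add_inner_add_of_lipschitz_grad
    (hderiv : ∀ x : E, HasFDerivAt f (innerSL ℝ (f' x)) x)
    (hlip : ∀ x y : E, ‖f' x - f' y‖ ≤ L * ‖x - y‖) (x y : E) :
    f y ≤ f x + inner ℝ (f' x) (y - x) + L / 2 * ‖y - x‖ ^ 2 := by
  set v := y - x
  let φ : ℝ → ℝ := fun t => f (x + t • v) - t * inner ℝ (f' x) v - L / 2 * t ^ 2 * ‖v‖ ^ 2
  have hφ : ∀ t, HasDerivAt φ
      (inner ℝ (f' (x + t • v)) v - inner ℝ (f' x) v - L * t * ‖v‖ ^ 2) t := by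
    intro t
    have hquad := ((hasDerivAt_pow 2 t).const_mul (L / 2)).mul_const (‖v‖ ^ 2)
    refine (((hasDerivAt_comp_add_smul (hderiv (x + t • v))).sub
      ((hasDerivAt_id t).mul_const (inner ℝ (f' x) v))).sub hquad).congr_deriv ?_
    norm_num only [one_mul, pow_one]; ring
  have hanti : AntitoneOn φ (Icc 0 1) := by
    refine antitoneOn_of_deriv_nonpos (convex_Icc 0 1)
      (fun t _ => (hφ t).continuousAt.continuousWithinAt)
      (fun t _ => (hφ t).differentiableAt.differentiableWithinAt) fun t ht => ?_
    rw [interior_Icc] at ht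
    rw [(hφ t).deriv]
    linarith [inner_sub_grad_le_of_lipschitz hlip x v ht.1.le]
  have h10 : φ 1 ≤ φ 0 := hanti (by norm_num) (by norm_num) zero_le_one
  simp only [φ, v, one_smul, add_sub_cancel, zero_smul, add_zero] at h10
  linarith

lemma ConvexOn.add_inner_le (hconv : ConvexOn ℝ univ f) {g x : E}
    (hf : HasFDerivAt f (innerSL ℝ g) x) (y : E) :
    f x + inner ℝ g (y - x) ≤ f y := by
  have hline : ConvexOn ℝ univ (fun t : ℝ => f (x + t • (y - x))) := by
    have hcomp : (fun t : ℝ => f (x + t • (y - x))) = f ∘ AffineMap.lineMap x y := by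
      ext t; simp [AffineMap.lineMap_apply, add_comm]
    simpa [hcomp] using hconv.comp_affineMap (AffineMap.lineMap x y)
  have hder : HasDerivAt (fun t : ℝ => f (x + t • (y - x))) (inner ℝ g (y - x)) 0 :=
    hasDerivAt_comp_add_smul (by simpa using hf)
  have := hline.le_slope_of_hasDerivAt (mem_univ 0) (mem_univ 1) zero_lt_one hder
  simp only [slope_def_field, one_smul, add_sub_cancel, zero_smul, add_zero, sub_zero,
    div_one] at this
  linarith

lemma le_sub_of_isMinOn_of_lipschitz_grad (hL : 0 < L)
    (hderiv : ∀ x : E, HasFDerivAt f (innerSL ℝ (f' x)) x)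
    (hlip : ∀ x y : E, ‖f' x - f' y‖ ≤ L * ‖x - y‖) {x : E} (hmin : IsMinOn f univ x) (y : E) :
    f x ≤ f y - 1 / (2 * L) * ‖f' y‖ ^ 2 := by
  have hstep : y - (1 / L) • f' y - y = -((1 / L) • f' y) := by abel
  have hdesc := le_add_inner_add_of_lipschitz_grad hderiv hlip y (y - (1 / L) • f' y)
  rw [hstep, inner_neg_right, real_inner_smul_right, real_inner_self_eq_norm_sq, norm_neg,
    norm_smul, Real.norm_of_nonneg (by positivity)] at hdesc
  calc f x ≤ f (y - (1 / L) • f' y) := hmin (mem_univ _)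
    _ ≤ f y + -(1 / L * ‖f' y‖ ^ 2) + L / 2 * (1 / L * ‖f' y‖) ^ 2 := hdesc
    _ = f y - 1 / (2 * L) * ‖f' y‖ ^ 2 := by field_simp; ring

lemma ConvexOn.add_inner_add_le_of_lipschitz_grad (hL : 0 < L) (hconv : ConvexOn ℝ univ f)
    (hderiv : ∀ x : E, HasFDerivAt f (innerSL ℝ (f' x)) x)
    (hlip : ∀ x y : E, ‖f' x - f' y‖ ≤ L * ‖x - y‖) (x y : E) :
    f x + inner ℝ (f' x) (y - x) + 1 / (2 * L) * ‖f' y - f' x‖ ^ 2 ≤ f y := by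
  let g : E → ℝ := fun z => f z - inner ℝ (f' x) z
  have hgderiv : ∀ z, HasFDerivAt g (innerSL ℝ (f' z - f' x)) z := fun z =>
    ((hderiv z).sub (innerSL ℝ (f' x)).hasFDerivAt).congr_fderiv (by ext; simp)
  have hgconv : ConvexOn ℝ univ g :=
    hconv.sub ((innerSL ℝ (f' x) : E →ₗ[ℝ] ℝ).concaveOn convex_univ)
  have hglip : ∀ a b : E, ‖(f' a - f' x) - (f' b - f' x)‖ ≤ L * ‖a - b‖ := by
    simpa only [sub_sub_sub_cancel_right] using hlip
  have hgmin : IsMinOn g univ x := fun z _ => by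
    simpa using hgconv.add_inner_le (hgderiv x) z
  have := le_sub_of_isMinOn_of_lipschitz_grad hL hgderiv hglip hgmin y
  simp only [g, inner_sub_right] at this ⊢
  linarith

end GradientInequalities

/-- Co-coercivity of the gradient of a convex `L`-smooth function:
`(1/L) ‖∇f x − ∇f y‖² ≤ ⟪∇f x − ∇f y, x − y⟫`. -/
theorem gradient_cocoercive
    {E : Type*} [NormedAddCommGroup E] [InnerProductSpace ℝ E]
    (f : E → ℝ) (f' : E → E) (L : ℝ) (hL : 0 < L)
    (hconv : ConvexOn ℝ (Set.univ : Set E) f)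
    (hderiv : ∀ x : E, HasFDerivAt f (innerSL ℝ (f' x)) x)
    (hlip : ∀ x y : E, ‖f' x - f' y‖ ≤ L * ‖x - y‖) :
    ∀ x y : E, (1 / L) * ‖f' x - f' y‖ ^ 2 ≤ inner ℝ (f' x - f' y) (x - y) := by
  intro x y
  have hxy := hconv.add_inner_add_le_of_lipschitz_grad hL hderiv hlip x y
  have hyx := hconv.add_inner_add_le_of_lipschitz_grad hL hderiv hlip y x
  have hsplit : inner ℝ (f' x - f' y) (x - y)
      = -inner ℝ (f' x) (y - x) - inner ℝ (f' y) (x - y) := by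
    rw [inner_sub_left, ← inner_neg_right, neg_sub]
  have hhalf : 1 / L = 1 / (2 * L) + 1 / (2 * L) := by field_simp; norm_num
  rw [norm_sub_rev] at hxy
  rw [hsplit, hhalf]
  linarith
end
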